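/- Let (M,i) be an image-finite pointed modal transition system over a finite event set Act. The following are equivalent: (i) (M,i) is refinement-equivalent to some pointed labelled transition system; (ii) for every Hennessy–Milner logic formula φ, (M,i) ⊨ᶜ φ implies (M,i) ⊨ᵃ φ; (iii) (M,i) ⊨ᵃ ψ for every formula ψ ∈ Φ. -/

import Mathlib

/-- A mixed transition system over event set `Act` with state set `σ`:
two transition relations `Ra` (asserted/must) and `Rc` (consistent/may). -/
structure MTS (Act σ : Type) where
  Ra : σ → Act → σ → Prop
  Rc : σ → Act → σ → Prop

namespace MTS

/-- `M` is a modal transition system iff `Ra ⊆ Rc`. -/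
def IsModal {Act σ : Type} (M : MTS Act σ) : Prop :=
  ∀ s α t, M.Ra s α t → M.Rc s α t

/-- `M` is image-finite. -/
def ImageFinite {Act σ : Type} (M : MTS Act σ) : Prop :=
  ∀ (s : σ) (α : Act), {t | M.Ra s α t}.Finite ∧ {t | M.Rc s α t}.Finite

end MTS

/-- A labelled transition system viewed as a mixed transition system `(Σ, R, R)`. -/
def LTS {Act σ : Type} (R : σ → Act → σ → Prop) : MTS Act σ := ⟨R, R⟩

/-- `Q` is a refinement from `M` to `N`. -/
def IsRefinement {Act σ τ : Type} (M : MTS Act σ) (N : MTS Act τ) (Q : σ → τ → Prop) : Prop :=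
  ∀ s t, Q s t → ∀ α : Act,
    (∀ s', M.Ra s α s' → ∃ t', N.Ra t α t' ∧ Q s' t') ∧
    (∀ t', N.Rc t α t' → ∃ s', M.Rc s α s' ∧ Q s' t')

/-- `(M,i) ⪯ (N,j)`: the pointed system `(N,j)` refines `(M,i)`. -/
def Refines {Act σ τ : Type} (M : MTS Act σ) (i : σ) (N : MTS Act τ) (j : τ) : Prop :=
  ∃ Q, IsRefinement M N Q ∧ Q i j

/-- Modes for the two judgments of the semantics: `a` (asserted), `c` (consistent). -/
inductive RMode where
  | a | c

/-- The dual mode: `¬a = c` and `¬c = a`. -/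
def RMode.negm : RMode → RMode
  | .a => .c
  | .c => .a

/-- The transition relation of mode `m`. -/
def MTS.R {Act σ : Type} (M : MTS Act σ) : RMode → σ → Act → σ → Prop
  | .a => M.Ra
  | .c => M.Rc

/-- Formulas of Hennessy–Milner logic over `Act`. -/
inductive HML (Act : Type) where
  | tt
  | neg (φ : HML Act)
  | dia (α : Act) (φ : HML Act)
  | and (φ ψ : HML Act)

/-- Larsen's semantics of Hennessy–Milner logic with two judgments `⊨ᵃ`, `⊨ᶜ`. -/
def Sat {Act σ : Type} (M : MTS Act σ) : HML Act → RMode → σ → Prop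
  | .tt, _, _ => True
  | .neg φ, m, s => ¬ Sat M φ m.negm s
  | .dia α φ, m, s => ∃ s', M.R m s α s' ∧ Sat M φ m s'
  | .and φ ψ, m, s => Sat M φ m s ∧ Sat M ψ m s

namespace HML

/-- `[α]φ = ¬⟨α⟩¬φ`. -/
def box {Act : Type} (α : Act) (φ : HML Act) : HML Act := .neg (.dia α (.neg φ))

/-- `φ ∨ ψ = ¬(¬φ ∧ ¬ψ)`. -/
def orf {Act : Type} (φ ψ : HML Act) : HML Act := .neg (.and (.neg φ) (.neg ψ))

/-- Finite conjunction (empty conjunction is `tt`). -/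
def bigAnd {Act : Type} : List (HML Act) → HML Act
  | [] => .tt
  | φ :: l => .and φ (bigAnd l)

/-- Finite disjunction (empty disjunction is `¬tt`). -/
def bigOr {Act : Type} : List (HML Act) → HML Act
  | [] => .neg .tt
  | φ :: l => orf φ (bigOr l)

/-- Modal depth of an HML formula. -/
def depth {Act : Type} : HML Act → ℕ
  | .tt => 0
  | .neg φ => φ.depth
  | .dia _ φ => 1 + φ.depth
  | .and φ ψ => max φ.depth ψ.depth

end HML

/-- Terms of the process algebra MPA. -/
inductive MPA (Act : Type) where
  | zero
  | bot
  | prefMust (α : Act) (p : MPA Act)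
  | prefMay (α : Act) (p : MPA Act)
  | plus (p q : MPA Act)

namespace MPA

variable {Act : Type} [DecidableEq Act]

/-- Must-successors of an MPA term for event `β` (structural operational semantics). -/
def must : MPA Act → Act → List (MPA Act)
  | .zero, _ => []
  | .bot, _ => []
  | .prefMust α p, β => if β = α then [p] else []
  | .prefMay _ _, _ => []
  | .plus p q, β => p.must β ++ q.must β

/-- All (must or may) successors of an MPA term for event `β`. -/
def may : MPA Act → Act → List (MPA Act)
  | .zero, _ => []
  | .bot, _ => [.bot]
  | .prefMust α p, β => if β = α then [p] else []
  | .prefMay α p, β => if β = α then [p] else []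
  | .plus p q, β => p.may β ++ q.may β

/-- The modal transition system `⟦·⟧` given by the structural operational semantics of MPA:
`Ra` is the set of must-transitions, `Rc` the set of all transitions. -/
def mts : MTS Act (MPA Act) :=
  ⟨fun p α q => q ∈ p.must α, fun p α q => q ∈ p.may α⟩

theorem sizeOf_lt_of_mem_must :
    ∀ (t : MPA Act) (α : Act) (r : MPA Act), r ∈ t.must α → sizeOf r < sizeOf t := by
  intro t
  induction t with
  | zero => intro α r h; simp [must] at h
  | bot => intro α r h; simp [must] at h
  | prefMust β p ih =>
      intro α r h
      simp only [must] at h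
      split at h <;> simp_all
  | prefMay β p ih => intro α r h; simp [must] at h
  | plus p q ihp ihq =>
      intro α r h
      simp only [must, List.mem_append] at h
      rcases h with h | h
      · have := ihp α r h; simp; omega
      · have := ihq α r h; simp; omega

theorem sizeOf_le_of_mem_may :
    ∀ (t : MPA Act) (α : Act) (r : MPA Act), r ∈ t.may α → sizeOf r ≤ sizeOf t := by
  intro t
  induction t with
  | zero => intro α r h; simp [may] at h
  | bot => intro α r h; simp [may] at h; simp [h]
  | prefMust β p ih =>
      intro α r h
      simp only [may] at h
      split at h <;> simp_all
  | prefMay β p ih =>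
      intro α r h
      simp only [may] at h
      split at h <;> simp_all
  | plus p q ihp ihq =>
      intro α r h
      simp only [may, List.mem_append] at h
      rcases h with h | h
      · have := ihp α r h; simp; omega
      · have := ihq α r h; simp; omega

theorem sizeOf_lt_plus_of_mem_may (p q : MPA Act) (α : Act) (r : MPA Act)
    (h : r ∈ (MPA.plus p q).may α) : sizeOf r < sizeOf (MPA.plus p q) := by
  simp only [may, List.mem_append] at h
  rcases h with h | h
  · have := sizeOf_le_of_mem_may p α r h; simp; omega
  · have := sizeOf_le_of_mem_may q α r h; simp; omega

end MPA

/-- The characteristic Hennessy–Milner formula `φ_p` of an MPA term `p`. -/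
noncomputable def charForm {Act : Type} [Fintype Act] [DecidableEq Act] : MPA Act → HML Act
  | .zero =>
      .bigAnd (((Finset.univ : Finset Act).toList).map fun α => .neg (.dia α .tt))
  | .bot => .tt
  | .prefMust α p =>
      .and (.dia α (charForm p)) (.and (HML.box α (charForm p))
        (.bigAnd ((((Finset.univ : Finset Act).toList).filter (fun β => β ≠ α)).map
          fun β => .neg (.dia β .tt))))
  | .prefMay α p =>
      .and (HML.box α (charForm p))
        (.bigAnd ((((Finset.univ : Finset Act).toList).filter (fun β => β ≠ α)).map
          fun β => .neg (.dia β .tt)))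
  | .plus p q =>
      .and
        (.bigAnd (((Finset.univ : Finset Act).toList).flatMap fun α =>
          ((MPA.plus p q).must α).attach.map fun r => HML.dia α (charForm r.1)))
        (.bigAnd (((Finset.univ : Finset Act).toList).map fun α =>
          HML.box α (.bigOr (((MPA.plus p q).may α).attach.map fun r => charForm r.1))))
decreasing_by
  all_goals first
    | exact MPA.sizeOf_lt_of_mem_must _ _ _ r.2
    | exact MPA.sizeOf_lt_plus_of_mem_may _ _ _ _ r.2
    | (simp; omega)
    | simp

/-- The formula `ψ_{w,α,p} = [δ₁]…[δₙ](⟨α⟩φ_p ∨ ¬⟨α⟩φ_p)`; the set `Φ` consists of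
all such formulas. -/
noncomputable def psiForm {Act : Type} [Fintype Act] [DecidableEq Act]
    (w : List Act) (α : Act) (p : MPA Act) : HML Act :=
  w.foldr (fun δ φ => HML.box δ φ)
    (HML.orf (.dia α (charForm p)) (.neg (.dia α (charForm p))))

/-- `Rᶜ`-reachability in a mixed transition system. -/
def MTS.ReachC {Act σ : Type} (M : MTS Act σ) : σ → σ → Prop :=
  Relation.ReflTransGen (fun s t => ∃ α, M.Rc s α t)

/-!
Refinement preserves `⊨ᵃ` forwards and `⊨ᶜ` backwards, and on a labelled transition system the
two judgments coincide; this gives (i) ⇒ (ii). Conversely `(Σ, Rᵃ)` is refined by `M` through the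
identity, and, by the Hennessy–Milner argument (image-finiteness turns a family of distinguishing
formulas into a finite conjunction), "every `⊨ᶜ`-formula of `t` is a `⊨ᶜ`-formula of `s`" is a
refinement from `(Σ, Rᵃ)` to `M`; (ii) relates `i` to itself. Every `ψ ∈ Φ` holds in `⊨ᶜ` by
excluded middle, so (ii) ⇒ (iii). For (iii) ⇒ (ii), the hypothesis propagates along `Rᶜ` through
the boxes of `ψ`, and we induct on `φ`. At `⟨α⟩φ` with `s →ᶜ s'`, take for `p` the unfolding of
`M` at `s'` to depth `φ.depth`: since `s' ⊨ᶜ φ_p`, the disjunct `¬⟨α⟩φ_p` of `ψ_{[],α,p}` fails,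
so some `Rᵃ`-successor of `s` satisfies `φ_p` in `⊨ᵃ`, hence refines `s'` up to depth
`φ.depth`, which is enough to carry `φ` over.
-/

variable {Act σ τ : Type}

theorem RMode.negm_negm (m : RMode) : m.negm.negm = m := by
  cases m <;> rfl

section Sat

variable (M : MTS Act σ) (m : RMode) (s : σ)

@[simp]
theorem sat_bigAnd (l : List (HML Act)) : Sat M (.bigAnd l) m s ↔ ∀ φ ∈ l, Sat M φ m s := by
  induction l with
  | nil => simp [HML.bigAnd, Sat]
  | cons φ l ih => simp [HML.bigAnd, Sat, ih]

@[simp]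
theorem sat_orf (φ ψ : HML Act) : Sat M (HML.orf φ ψ) m s ↔ Sat M φ m s ∨ Sat M ψ m s := by
  simp only [HML.orf, Sat, RMode.negm_negm]
  tauto

@[simp]
theorem sat_bigOr (l : List (HML Act)) : Sat M (.bigOr l) m s ↔ ∃ φ ∈ l, Sat M φ m s := by
  induction l with
  | nil => simp [HML.bigOr, Sat]
  | cons φ l ih => simp [HML.bigOr, ih]

@[simp]
theorem sat_box (α : Act) (φ : HML Act) :
    Sat M (HML.box α φ) m s ↔ ∀ s', M.R m.negm s α s' → Sat M φ m s' := by
  simp only [HML.box, Sat, RMode.negm_negm, not_exists, not_and, not_not]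

end Sat

def RefinesUpTo (M : MTS Act σ) (N : MTS Act τ) : ℕ → σ → τ → Prop
  | 0, _, _ => True
  | n + 1, s, t => ∀ α : Act,
      (∀ s', M.Ra s α s' → ∃ t', N.Ra t α t' ∧ RefinesUpTo M N n s' t') ∧
      (∀ t', N.Rc t α t' → ∃ s', M.Rc s α s' ∧ RefinesUpTo M N n s' t')

theorem RefinesUpTo.sat {M : MTS Act σ} {N : MTS Act τ} (φ : HML Act) :
    ∀ {n s t}, RefinesUpTo M N n s t → φ.depth ≤ n →
      (Sat M φ .a s → Sat N φ .a t) ∧ (Sat N φ .c t → Sat M φ .c s) := by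
  induction φ with
  | tt => simp [Sat]
  | neg φ ih =>
    intro n s t h hd
    exact ⟨fun hs ht => hs ((ih h hd).2 ht), fun ht hs => ht ((ih h hd).1 hs)⟩
  | dia α φ ih =>
    rintro (_ | n) s t h hd
    · simp [HML.depth] at hd
    have hd : φ.depth ≤ n := by simp only [HML.depth] at hd; omega
    constructor
    · rintro ⟨s', hs, hφ⟩
      obtain ⟨t', ht, h'⟩ := (h α).1 s' hs
      exact ⟨t', ht, (ih h' hd).1 hφ⟩
    · rintro ⟨t', ht, hφ⟩
      obtain ⟨s', hs, h'⟩ := (h α).2 t' ht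
      exact ⟨s', hs, (ih h' hd).2 hφ⟩
  | and φ ψ ihφ ihψ =>
    intro n s t h hd
    have hφ := ihφ h (le_of_max_le_left hd)
    have hψ := ihψ h (le_of_max_le_right hd)
    exact ⟨fun ⟨h₁, h₂⟩ => ⟨hφ.1 h₁, hψ.1 h₂⟩, fun ⟨h₁, h₂⟩ => ⟨hφ.2 h₁, hψ.2 h₂⟩⟩

theorem IsRefinement.refinesUpTo {M : MTS Act σ} {N : MTS Act τ} {Q : σ → τ → Prop}
    (hQ : IsRefinement M N Q) (n : ℕ) : ∀ {s t}, Q s t → RefinesUpTo M N n s t := by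
  induction n with
  | zero => exact fun _ => trivial
  | succ n ih =>
    intro s t hst α
    refine ⟨fun s' hs => ?_, fun t' ht => ?_⟩
    · obtain ⟨t', ht, h⟩ := (hQ s t hst α).1 s' hs
      exact ⟨t', ht, ih h⟩
    · obtain ⟨s', hs, h⟩ := (hQ s t hst α).2 t' ht
      exact ⟨s', hs, ih h⟩

theorem IsRefinement.sat {M : MTS Act σ} {N : MTS Act τ} {Q : σ → τ → Prop}
    (hQ : IsRefinement M N Q) {s : σ} {t : τ} (hst : Q s t) (φ : HML Act) :
    (Sat M φ .a s → Sat N φ .a t) ∧ (Sat N φ .c t → Sat M φ .c s) :=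
  (hQ.refinesUpTo φ.depth hst).sat φ le_rfl

theorem LTS_R (R : σ → Act → σ → Prop) (m : RMode) : (LTS R).R m = R := by
  cases m <;> rfl

theorem sat_LTS_iff (R : σ → Act → σ → Prop) (φ : HML Act) (m m' : RMode) (s : σ) :
    Sat (LTS R) φ m s ↔ Sat (LTS R) φ m' s := by
  induction φ generalizing m m' s with
  | tt => exact Iff.rfl
  | neg φ ih => exact not_congr (ih _ _ s)
  | dia α φ ih => simp only [Sat, LTS_R, ih m m']
  | and φ ψ ihφ ihψ => exact and_congr (ihφ m m' s) (ihψ m m' s)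

theorem MTS.IsModal.isRefinement_LTS_Ra {M : MTS Act σ} (hM : M.IsModal) :
    IsRefinement M (LTS M.Ra) Eq := by
  rintro s _ rfl α
  exact ⟨fun s' h => ⟨s', h, rfl⟩, fun s' h => ⟨s', hM _ _ _ h, rfl⟩⟩

theorem MTS.IsModal.sat_c_of_sat_a {M : MTS Act σ} (hM : M.IsModal) {φ : HML Act} {s : σ}
    (h : Sat M φ .a s) : Sat M φ .c s :=
  have hφ := hM.isRefinement_LTS_Ra.sat rfl φ
  hφ.2 ((sat_LTS_iff _ φ .a .c s).1 (hφ.1 h))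

theorem sat_bigAnd_map_toList {S : Set τ} (hS : S.Finite) (f : τ → HML Act) (M : MTS Act σ)
    (m : RMode) (s : σ) :
    Sat M (.bigAnd (hS.toFinset.toList.map f)) m s ↔ ∀ x ∈ S, Sat M (f x) m s := by
  simp

theorem isRefinement_of_forall_sat_c {M : MTS Act σ} {N : MTS Act τ}
    (hM : ∀ s α, {s' | M.Rc s α s'}.Finite) (hN : ∀ t α, {t' | N.Ra t α t'}.Finite) :
    IsRefinement M N (fun s t => ∀ φ : HML Act, Sat N φ .c t → Sat M φ .c s) := by
  intro s t hst α
  have hst_a (φ : HML Act) (hs : Sat M φ .a s) : Sat N φ .a t :=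
    not_not.1 fun ht => hst (.neg φ) ht hs
  have : Nonempty (HML Act) := ⟨.tt⟩
  constructor
  · intro s' hs'
    by_contra! hcon
    choose! f hf using hcon
    let χ : HML Act := .dia α (.bigAnd ((hN t α).toFinset.toList.map fun t' => .neg (f t')))
    obtain ⟨t', ht', hconj⟩ : Sat N χ .a t :=
      hst_a χ ⟨s', hs', (sat_bigAnd_map_toList ..).2 fun t' ht' => (hf t' ht').2⟩
    exact (sat_bigAnd_map_toList ..).1 hconj t' ht' (hf t' ht').1
  · intro t' ht'
    by_contra! hcon
    choose! g hg using hcon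
    let χ : HML Act := .dia α (.bigAnd ((hM s α).toFinset.toList.map g))
    obtain ⟨s', hs', hconj⟩ : Sat M χ .c s :=
      hst χ ⟨t', ht', (sat_bigAnd_map_toList ..).2 fun s' hs' => (hg s' hs').1⟩
    exact (hg s' hs').2 ((sat_bigAnd_map_toList ..).1 hconj s' hs')

theorem Refines.sat_a_of_sat_c_of_LTS {T : Type} {R : T → Act → T → Prop} {l : T}
    {M : MTS Act σ} {i : σ} (h : Refines (LTS R) l M i) (φ : HML Act) (hc : Sat M φ .c i) :
    Sat M φ .a i :=
  have ⟨_, hQ, hli⟩ := h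
  have hφ := hQ.sat hli φ
  hφ.1 ((sat_LTS_iff R φ .c .a l).1 (hφ.2 hc))

theorem MTS.IsModal.refines_LTS_Ra {M : MTS Act σ} (hM : M.IsModal) (i : σ) :
    Refines M i (LTS M.Ra) i :=
  ⟨Eq, hM.isRefinement_LTS_Ra, rfl⟩

theorem MTS.IsModal.LTS_Ra_refines {M : MTS Act σ} (hM : M.IsModal) (hMf : M.ImageFinite)
    {i : σ} (hi : ∀ φ : HML Act, Sat M φ .c i → Sat M φ .a i) : Refines (LTS M.Ra) i M i :=
  ⟨_, isRefinement_of_forall_sat_c (fun s α => (hMf s α).1) (fun s α => (hMf s α).1),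
    fun φ hc => (sat_LTS_iff M.Ra φ .a .c i).1 ((hM.isRefinement_LTS_Ra.sat rfl φ).1 (hi φ hc))⟩

namespace MPA

variable [DecidableEq Act] {α : Act} {r : MPA Act}

def sum (ps : List (MPA Act)) : MPA Act :=
  ps.foldr plus zero

@[simp]
theorem mem_must_sum {ps : List (MPA Act)} : r ∈ (sum ps).must α ↔ ∃ p ∈ ps, r ∈ p.must α := by
  induction ps with
  | nil => simp [sum, must]
  | cons p ps ih => simp_all [sum, must]

@[simp]
theorem mem_may_sum {ps : List (MPA Act)} : r ∈ (sum ps).may α ↔ ∃ p ∈ ps, r ∈ p.may α := by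
  induction ps with
  | nil => simp [sum, may]
  | cons p ps ih => simp_all [sum, may]

end MPA

theorem sat_charForm_plus [Fintype Act] [DecidableEq Act] (N : MTS Act τ) (p q : MPA Act)
    (m : RMode) (u : τ) :
    Sat N (charForm (.plus p q)) m u ↔
      (∀ α, ∀ r ∈ (MPA.plus p q).must α, ∃ u', N.R m u α u' ∧ Sat N (charForm r) m u') ∧
      (∀ α u', N.R m.negm u α u' → ∃ r ∈ (MPA.plus p q).may α, Sat N (charForm r) m u') := by
  rw [charForm]
  simp only [Sat, sat_bigAnd, List.forall_mem_flatMap, List.forall_mem_map]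
  simp

section Unfolding

variable [Fintype Act] [DecidableEq Act]

/-- The outer `plus _ zero` makes `charForm` take its `plus` clause however many summands there
are. -/
noncomputable def unfoldTerm (M : MTS Act σ) (hMf : M.ImageFinite) : ℕ → σ → MPA Act
  | 0, _ => .bot
  | n + 1, s => .plus (MPA.sum ((Finset.univ : Finset Act).toList.flatMap fun α =>
      (hMf s α).1.toFinset.toList.map (fun t => .prefMust α (unfoldTerm M hMf n t)) ++
      (hMf s α).2.toFinset.toList.map (fun t => .prefMay α (unfoldTerm M hMf n t)))) .zero

variable {M : MTS Act σ} {hMf : M.ImageFinite} {n : ℕ} {s : σ} {α : Act} {r : MPA Act}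

theorem mem_must_unfoldTerm_succ :
    r ∈ (unfoldTerm M hMf (n + 1) s).must α ↔ ∃ t, M.Ra s α t ∧ r = unfoldTerm M hMf n t := by
  simp [unfoldTerm, MPA.must, or_and_right, exists_or]

theorem mem_may_unfoldTerm_succ (hM : M.IsModal) :
    r ∈ (unfoldTerm M hMf (n + 1) s).may α ↔ ∃ t, M.Rc s α t ∧ r = unfoldTerm M hMf n t := by
  have hmay : r ∈ (unfoldTerm M hMf (n + 1) s).may α ↔
      (∃ t, M.Ra s α t ∧ r = unfoldTerm M hMf n t) ∨ ∃ t, M.Rc s α t ∧ r = unfoldTerm M hMf n t := by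
    simp [unfoldTerm, MPA.may, or_and_right, exists_or]
  rw [hmay, or_iff_right_of_imp]
  rintro ⟨t, ht, rfl⟩
  exact ⟨t, hM _ _ _ ht, rfl⟩

theorem sat_charForm_unfoldTerm_succ (hM : M.IsModal) (N : MTS Act τ) (m : RMode) (u : τ) :
    Sat N (charForm (unfoldTerm M hMf (n + 1) s)) m u ↔
      (∀ α t, M.Ra s α t → ∃ u', N.R m u α u' ∧ Sat N (charForm (unfoldTerm M hMf n t)) m u') ∧
      (∀ α u', N.R m.negm u α u' →
        ∃ t, M.Rc s α t ∧ Sat N (charForm (unfoldTerm M hMf n t)) m u') := by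
  obtain ⟨p, hp⟩ : ∃ p, unfoldTerm M hMf (n + 1) s = .plus p .zero := ⟨_, rfl⟩
  rw [hp, sat_charForm_plus, ← hp]
  simp [mem_must_unfoldTerm_succ, mem_may_unfoldTerm_succ hM, forall_comm (α := MPA Act)]

theorem refinesUpTo_of_sat_charForm_unfoldTerm (hM : M.IsModal) {N : MTS Act τ} :
    ∀ {n s} {u : τ}, Sat N (charForm (unfoldTerm M hMf n s)) .a u → RefinesUpTo M N n s u
  | 0, _, _, _ => trivial
  | n + 1, s, u, h => by
    rw [sat_charForm_unfoldTerm_succ hM] at h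
    intro α
    refine ⟨fun t ht => ?_, fun u' hu' => ?_⟩
    · obtain ⟨u', hu', hsat⟩ := h.1 α t ht
      exact ⟨u', hu', refinesUpTo_of_sat_charForm_unfoldTerm hM hsat⟩
    · obtain ⟨t, ht, hsat⟩ := h.2 α u' hu'
      exact ⟨t, ht, refinesUpTo_of_sat_charForm_unfoldTerm hM hsat⟩

theorem sat_c_charForm_unfoldTerm_self (hM : M.IsModal) :
    ∀ n s, Sat M (charForm (unfoldTerm M hMf n s)) .c s
  | 0, _ => by simp [unfoldTerm, charForm, Sat]
  | n + 1, s => (sat_charForm_unfoldTerm_succ hM M .c s).2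
      ⟨fun _ t ht => ⟨t, hM _ _ _ ht, sat_c_charForm_unfoldTerm_self hM n t⟩,
        fun _ t ht => ⟨t, hM _ _ _ ht, sat_c_charForm_unfoldTerm_self hM n t⟩⟩

end Unfolding

section Psi

variable [Fintype Act] [DecidableEq Act] {M : MTS Act σ}

theorem sat_a_psiForm_cons {δ α : Act} {w : List Act} {p : MPA Act} {s : σ} :
    Sat M (psiForm (δ :: w) α p) .a s ↔ ∀ s', M.Rc s δ s' → Sat M (psiForm w α p) .a s' :=
  sat_box M .a s δ (psiForm w α p)

theorem MTS.IsModal.sat_c_psiForm (hM : M.IsModal) (w : List Act) (α : Act) (p : MPA Act)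
    (s : σ) : Sat M (psiForm w α p) .c s := by
  induction w generalizing s with
  | nil =>
    change Sat M (HML.orf _ (.neg _)) .c s
    rw [sat_orf, or_iff_not_imp_right]
    exact fun h => hM.sat_c_of_sat_a (not_not.1 h)
  | cons δ w ih => exact (sat_box M .c s δ _).2 fun s' _ => ih s'

theorem sat_a_of_sat_c_of_forall_psiForm (hM : M.IsModal) (hMf : M.ImageFinite)
    (φ : HML Act) {s : σ} (hΦ : ∀ w α p, Sat M (psiForm w α p) .a s) (h : Sat M φ .c s) :
    Sat M φ .a s := by
  induction φ generalizing s with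
  | tt => trivial
  | neg φ ih => exact fun ha => h (ih hΦ ha)
  | dia α φ ih =>
    obtain ⟨s', hs', hφ⟩ := h
    have hφ : Sat M φ .a s' :=
      ih (fun w β q => sat_a_psiForm_cons.1 (hΦ (α :: w) β q) s' hs') hφ
    set p := unfoldTerm M hMf φ.depth s'
    have hψ : Sat M (.dia α (charForm p)) .a s ∨ ¬ Sat M (.dia α (charForm p)) .c s :=
      (sat_orf M .a s _ _).1 (hΦ [] α p)
    rcases hψ with ⟨s'', hs'', hp⟩ | hnot
    · exact ⟨s'', hs'', ((refinesUpTo_of_sat_charForm_unfoldTerm hM hp).sat φ le_rfl).1 hφ⟩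
    · exact absurd ⟨s', hs', sat_c_charForm_unfoldTerm_self hM φ.depth s'⟩ hnot
  | and φ ψ ihφ ihψ => exact ⟨ihφ hΦ h.1, ihψ hΦ h.2⟩

end Psi

/-- For an image-finite pointed modal transition system `(M,i)` the
following are equivalent: (i) `(M,i)` is refinement-equivalent to some pointed
labelled transition system; (ii) `(M,i) ⊨ᶜ φ` implies `(M,i) ⊨ᵃ φ` for every HML
formula `φ`; (iii) `(M,i) ⊨ᵃ ψ` for every `ψ ∈ Φ`. -/
theorem equivalent_characterizations_of_LTS_like {Act σ : Type}
    [Fintype Act] [DecidableEq Act]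
    (M : MTS Act σ) (hM : M.IsModal) (hMf : M.ImageFinite) (i : σ) :
    ((∃ (T : Type) (R : T → Act → T → Prop) (l : T),
        Refines M i (LTS R) l ∧ Refines (LTS R) l M i) ↔
      (∀ φ : HML Act, Sat M φ .c i → Sat M φ .a i)) ∧
    ((∀ φ : HML Act, Sat M φ .c i → Sat M φ .a i) ↔
      (∀ (w : List Act) (α : Act) (p : MPA Act), Sat M (psiForm w α p) .a i)) := by
  refine ⟨⟨?_, fun hii => ⟨σ, M.Ra, i, hM.refines_LTS_Ra i, hM.LTS_Ra_refines hMf hii⟩⟩,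
    fun hii w α p => hii _ (hM.sat_c_psiForm w α p i),
    fun hΦ φ => sat_a_of_sat_c_of_forall_psiForm hM hMf φ hΦ⟩
  rintro ⟨T, R, l, -, h⟩
  exact h.sat_a_of_sat_c_of_LTS
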